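/- arXiv:1103.1935 — 4 statements merged into one kernel-verified Lean document; each statement's English description precedes it below -/
import Mathlib

section
/- For every f in the algebra AP of almost periodic functions (the uniform closure on ℝ of finite linear combinations of e_λ(x) = e^{iλx}, λ ∈ ℝ), the mean value M(f) = lim_{T→∞} (1/(2T)) ∫_{-T}^{T} f(t) dt exists. -/
noncomputable section
open Complex MeasureTheory Filter Topology

/-- Almost periodic polynomials: finite linear combinations of `x ↦ e^{iλx}`. -/
def IsAPPoly (f : ℝ → ℂ) : Prop :=
  ∃ (s : Finset ℝ) (c : ℝ → ℂ),
    ∀ x : ℝ, f x = ∑ l ∈ s, c l * Complex.exp (Complex.I * l * x)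

/-- The algebra `AP`: uniform limits on `ℝ` of almost periodic polynomials. -/
def MemAP (f : ℝ → ℂ) : Prop :=
  ∀ ε : ℝ, 0 < ε → ∃ g : ℝ → ℂ, IsAPPoly g ∧ ∀ x : ℝ, ‖f x - g x‖ ≤ ε

/-- `m` is the Bohr mean value of `f`. -/
def HasMeanValue (f : ℝ → ℂ) (m : ℂ) : Prop :=
  Tendsto (fun T : ℝ => ((2 * T : ℝ) : ℂ)⁻¹ * ∫ t in (-T)..T, f t) atTop (nhds m)

/-!
Averaging over `[-T, T]` is `1`-Lipschitz for the sup norm, uniformly in `T`. The exponential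
`e^{iλx}` with `λ ≠ 0` has integral bounded by `2 / |λ|` over every interval, so its mean value
is `0` (and it is `1` for `λ = 0`); by linearity every almost periodic polynomial has a mean
value. For a uniform limit `f` of such polynomials, the averages of `f` are therefore uniformly
close to convergent ones, hence form a Cauchy net in `T`, which converges since `ℂ` is complete.
-/

def symmAverage (f : ℝ → ℂ) (T : ℝ) : ℂ := ((2 * T : ℝ) : ℂ)⁻¹ * ∫ t in (-T)..T, f t

theorem hasMeanValue_iff_tendsto_symmAverage {f : ℝ → ℂ} {m : ℂ} :
    HasMeanValue f m ↔ Tendsto (symmAverage f) atTop (𝓝 m) := Iff.rfl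

theorem dist_symmAverage_le {f g : ℝ → ℂ} (hf : Continuous f) (hg : Continuous g) {ε T : ℝ}
    (hT : 0 < T) (hfg : ∀ x, ‖f x - g x‖ ≤ ε) :
    dist (symmAverage f T) (symmAverage g T) ≤ ε := by
  have hint : ‖∫ t in (-T)..T, (f t - g t)‖ ≤ ε * (2 * T) := by
    simpa [two_mul, abs_of_pos (by linarith : 0 < T + T)] using
      intervalIntegral.norm_integral_le_of_norm_le_const (a := -T) (b := T) fun x _ => hfg x
  rw [dist_eq_norm, symmAverage, symmAverage, ← mul_sub,
    ← intervalIntegral.integral_sub (hf.intervalIntegrable _ _) (hg.intervalIntegrable _ _),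
    norm_mul, norm_inv, Complex.norm_real, Real.norm_of_nonneg (by positivity),
    inv_mul_le_iff₀ (by positivity)]
  linarith

theorem norm_exp_I_mul_ofReal_mul_ofReal (l t : ℝ) : ‖exp (I * l * t)‖ = 1 := by
  rw [Complex.norm_exp]; simp

theorem norm_integral_exp_I_mul_le {l : ℝ} (hl : l ≠ 0) (a b : ℝ) :
    ‖∫ t in a..b, exp (I * l * t)‖ ≤ 2 / |l| := by
  have hIl : I * l ≠ 0 := mul_ne_zero I_ne_zero (ofReal_ne_zero.2 hl)
  rw [integral_exp_mul_complex hIl, norm_div, norm_mul, norm_I, one_mul, norm_real,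
    Real.norm_eq_abs]
  gcongr
  calc ‖exp (I * l * b) - exp (I * l * a)‖ ≤ ‖exp (I * l * b)‖ + ‖exp (I * l * a)‖ :=
        norm_sub_le _ _
    _ = 2 := by rw [norm_exp_I_mul_ofReal_mul_ofReal, norm_exp_I_mul_ofReal_mul_ofReal]; norm_num

theorem hasMeanValue_exp_I_mul (l : ℝ) :
    HasMeanValue (fun t => exp (I * l * t)) (if l = 0 then 1 else 0) := by
  rcases eq_or_ne l 0 with rfl | hl
  · refine tendsto_const_nhds.congr' ?_
    filter_upwards [eventually_gt_atTop 0] with T hT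
    simp [intervalIntegral.integral_const, two_mul, hT.ne']
  · have hinv : Tendsto (fun T : ℝ => ((2 * T : ℝ) : ℂ)⁻¹) atTop (𝓝 0) := by
      simpa only [ofReal_inv, ofReal_zero, Function.comp_def, id_eq] using
        (tendsto_inv_atTop_zero.comp (tendsto_id.const_mul_atTop two_pos)).ofReal
    rw [if_neg hl]
    exact hinv.zero_mul_isBoundedUnder_le
      (isBoundedUnder_of ⟨2 / |l|, fun T => norm_integral_exp_I_mul_le hl _ _⟩)

theorem IsAPPoly.exists_eq_sum {g : ℝ → ℂ} (hg : IsAPPoly g) :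
    ∃ (s : Finset ℝ) (c : ℝ → ℂ), g = fun x : ℝ => ∑ l ∈ s, c l * exp (I * l * x) :=
  let ⟨s, c, hc⟩ := hg
  ⟨s, c, funext hc⟩

theorem IsAPPoly.continuous {g : ℝ → ℂ} (hg : IsAPPoly g) : Continuous g := by
  obtain ⟨s, c, rfl⟩ := hg.exists_eq_sum
  fun_prop

theorem IsAPPoly.exists_hasMeanValue {g : ℝ → ℂ} (hg : IsAPPoly g) : ∃ m, HasMeanValue g m := by
  obtain ⟨s, c, rfl⟩ := hg.exists_eq_sum
  refine ⟨∑ l ∈ s, c l * if l = 0 then 1 else 0,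
    (tendsto_finsetSum s fun l _ => (hasMeanValue_exp_I_mul l).const_mul (c l)).congr fun T => ?_⟩
  dsimp only
  rw [intervalIntegral.integral_finsetSum fun l _ =>
    (by fun_prop : Continuous _).intervalIntegrable _ _, Finset.mul_sum]
  refine Finset.sum_congr rfl fun l _ => ?_
  rw [intervalIntegral.integral_const_mul]
  ring

theorem MemAP.continuous {f : ℝ → ℂ} (hf : MemAP f) : Continuous f :=
  continuous_of_uniform_approx_of_continuous fun u hu => by
    obtain ⟨ε, hε, hεu⟩ := Metric.mem_uniformity_dist.1 hu
    obtain ⟨g, hg, hfg⟩ := hf (ε / 2) (half_pos hε)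
    exact ⟨g, hg.continuous, fun x => hεu (by rw [dist_eq_norm]; linarith [hfg x])⟩

theorem exists_tendsto_atTop_of_forall_approx {β E : Type*} [Nonempty β] [SemilatticeSup β]
    [PseudoMetricSpace E] [CompleteSpace E] {F : β → E}
    (h : ∀ ε > 0, ∃ G : β → E, (∃ m, Tendsto G atTop (𝓝 m)) ∧ ∀ᶠ T in atTop, dist (F T) (G T) ≤ ε) :
    ∃ m, Tendsto F atTop (𝓝 m) := by
  refine cauchySeq_tendsto_of_complete (Metric.cauchySeq_iff.2 fun ε hε => ?_)
  obtain ⟨G, ⟨m, hGm⟩, hFG⟩ := h (ε / 4) (by positivity)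
  obtain ⟨N₁, hG⟩ := Metric.cauchySeq_iff.1 hGm.cauchySeq (ε / 4) (by positivity)
  obtain ⟨N₂, hFG⟩ := eventually_atTop.1 hFG
  refine ⟨N₁ ⊔ N₂, fun s hs t ht => ?_⟩
  calc dist (F s) (F t) ≤ dist (F s) (G s) + dist (G s) (G t) + dist (G t) (F t) :=
        dist_triangle4 _ _ _ _
    _ ≤ ε / 4 + ε / 4 + ε / 4 := by
        gcongr
        · exact hFG s (le_sup_right.trans hs)
        · exact (hG s (le_sup_left.trans hs) t (le_sup_left.trans ht)).le
        · exact dist_comm (F t) (G t) ▸ hFG t (le_sup_right.trans ht)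
    _ < ε := by linarith

/-- Every almost periodic function has a mean value. -/
theorem stmt7 (f : ℝ → ℂ) (hf : MemAP f) : ∃ m : ℂ, HasMeanValue f m := by
  simp_rw [hasMeanValue_iff_tendsto_symmAverage]
  refine exists_tendsto_atTop_of_forall_approx fun ε hε => ?_
  obtain ⟨g, hg, hfg⟩ := hf ε hε
  refine ⟨symmAverage g, hg.exists_hasMeanValue, ?_⟩
  filter_upwards [eventually_gt_atTop 0] with T hT
  exact dist_symmAverage_le hf.continuous hg.continuous hT hfg
end
end

section
/- Let N > 1 be an integer, λ > 0, ν, β ≥ 0 with ν + β = λ/N, and let a₊ ∈ H∞⁺, a₋ ∈ H∞⁻ satisfy b₊ := e_{β/(N-1)} a₋ ∈ H∞⁺ and b₋ := e_{-ν/(N-1)} a₊ ∈ H∞⁻. Set g = a₋ e_{-β} + a₊ e_ν. Then the functions φ₁₊ = e_{λ-ν} ∑_{j=0}^{N-1} (-1)^j a₊^{N-1-j} a₋^j e_{-jλ/N} and φ₁₋ = e_{-λ} φ₁₊ satisfy φ₁₊ ∈ H∞⁺ and φ₁₋ ∈ H∞⁻. -/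
noncomputable section
open Complex MeasureTheory Filter Topology
open scoped ENNReal

/-- Bounded analytic functions on the upper half-plane. -/
def HInfPlus (f : ℂ → ℂ) : Prop :=
  DifferentiableOn ℂ f {z : ℂ | 0 < z.im} ∧
    ∃ C : ℝ, ∀ z : ℂ, 0 < z.im → ‖f z‖ ≤ C

/-- Bounded analytic functions on the lower half-plane. -/
def HInfMinus (f : ℂ → ℂ) : Prop :=
  DifferentiableOn ℂ f {z : ℂ | z.im < 0} ∧
    ∃ C : ℝ, ∀ z : ℂ, z.im < 0 → ‖f z‖ ≤ C

/-- Hardy class `H_p` of the upper half-plane. -/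
def HardyPlus (p : ℝ≥0∞) (f : ℂ → ℂ) : Prop :=
  DifferentiableOn ℂ f {z : ℂ | 0 < z.im} ∧
    ∃ C : ℝ≥0∞, ∀ y : ℝ, 0 < y →
      eLpNorm (fun x : ℝ => f (x + y * Complex.I)) p volume ≤ C

/-- Hardy class `H_p` of the lower half-plane. -/
def HardyMinus (p : ℝ≥0∞) (f : ℂ → ℂ) : Prop :=
  DifferentiableOn ℂ f {z : ℂ | z.im < 0} ∧
    ∃ C : ℝ≥0∞, ∀ y : ℝ, y < 0 →
      eLpNorm (fun x : ℝ => f (x + y * Complex.I)) p volume ≤ C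

/-- A function on `ℝ` is a boundary value of an `H∞⁺` function. -/
def BdryHInfPlus (d : ℝ → ℂ) : Prop := ∃ F : ℂ → ℂ, HInfPlus F ∧ ∀ x : ℝ, F x = d x

/-- A function on `ℝ` is a boundary value of an `H∞⁻` function. -/
def BdryHInfMinus (d : ℝ → ℂ) : Prop := ∃ F : ℂ → ℂ, HInfMinus F ∧ ∀ x : ℝ, F x = d x

/-- `d` is of (strictly) positive type. -/
def PositiveType (d : ℝ → ℂ) : Prop :=
  (BdryHInfPlus d ∨ BdryHInfMinus fun x => (d x)⁻¹) ∧
    ¬ (BdryHInfMinus d ∨ BdryHInfPlus fun x => (d x)⁻¹)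


/-- The entire exponential `z ↦ e^{iμz}`. -/
def eFun (mu : ℝ) : ℂ → ℂ := fun z => Complex.exp (Complex.I * mu * z)

/-!
With `b₊ = e_{β/(N-1)} a₋` and `b₋ = e_{-ν/(N-1)} a₊`, the relation `ν + β = λ/N` regroups the
exponentials so that
`φ₁₊ = ∑ (-1)^j (e_c a₊)^(N-1-j) b₊^j` with `c = λ/N + β/(N-1) ≥ 0`, and
`φ₁₋ = ∑ (-1)^j b₋^(N-1-j) (e_{-d} a₋)^j` with `d = λ/N + ν/(N-1) ≥ 0`.
Since `|e_μ(z)| = exp(-μ Im z)`, `e_c ∈ H∞⁺` and `e_{-d} ∈ H∞⁻`, so both sums are polynomials in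
elements of the algebras `H∞⁺` and `H∞⁻` respectively.
-/

def boundedHolomorphicOn (U : Set ℂ) : Subalgebra ℂ (ℂ → ℂ) where
  carrier := {f | DifferentiableOn ℂ f U ∧ ∃ C : ℝ, ∀ z ∈ U, ‖f z‖ ≤ C}
  mul_mem' := by
    rintro f g ⟨hf, Cf, hCf⟩ ⟨hg, Cg, hCg⟩
    refine ⟨hf.mul hg, Cf * Cg, fun z hz => ?_⟩
    rw [Pi.mul_apply, norm_mul]
    exact mul_le_mul (hCf z hz) (hCg z hz) (norm_nonneg _) ((norm_nonneg _).trans (hCf z hz))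
  add_mem' := by
    rintro f g ⟨hf, Cf, hCf⟩ ⟨hg, Cg, hCg⟩
    exact ⟨hf.add hg, Cf + Cg, fun z hz =>
      (norm_add_le _ _).trans (add_le_add (hCf z hz) (hCg z hz))⟩
  algebraMap_mem' c := ⟨differentiableOn_const c, ‖c‖, fun _ _ => le_rfl⟩

lemma hInfPlus_iff_mem {f : ℂ → ℂ} : HInfPlus f ↔ f ∈ boundedHolomorphicOn {z | 0 < z.im} :=
  Iff.rfl

lemma hInfMinus_iff_mem {f : ℂ → ℂ} : HInfMinus f ↔ f ∈ boundedHolomorphicOn {z | z.im < 0} :=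
  Iff.rfl

lemma alternating_sum_pow_mem {S : Subalgebra ℂ (ℂ → ℂ)} {f g : ℂ → ℂ} (hf : f ∈ S) (hg : g ∈ S)
    (N : ℕ) : (fun z => ∑ j ∈ Finset.range N, (-1 : ℂ) ^ j * f z ^ (N - 1 - j) * g z ^ j) ∈ S := by
  have h : (fun z => ∑ j ∈ Finset.range N, (-1 : ℂ) ^ j * f z ^ (N - 1 - j) * g z ^ j) =
      ∑ j ∈ Finset.range N, ((-1 : ℂ) ^ j) • (f ^ (N - 1 - j) * g ^ j) := by
    ext z
    simp [Finset.sum_apply, mul_assoc]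
  rw [h]
  exact S.sum_mem fun j _ => S.smul_mem (S.mul_mem (S.pow_mem hf _) (S.pow_mem hg _)) _

lemma eFun_mul_eFun (a b : ℝ) (z : ℂ) : eFun a z * eFun b z = eFun (a + b) z := by
  simp only [eFun, ← Complex.exp_add]
  push_cast
  ring_nf

lemma eFun_pow (a : ℝ) (n : ℕ) (z : ℂ) : eFun a z ^ n = eFun (n * a) z := by
  simp only [eFun, ← Complex.exp_nat_mul]
  push_cast
  ring_nf

lemma norm_eFun (a : ℝ) (z : ℂ) : ‖eFun a z‖ = Real.exp (-(a * z.im)) := by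
  simp [eFun, Complex.norm_exp, Complex.mul_re]

lemma eFun_mem_boundedHolomorphicOn {a : ℝ} {U : Set ℂ} (hU : ∀ z ∈ U, 0 ≤ a * z.im) :
    eFun a ∈ boundedHolomorphicOn U := by
  refine ⟨Differentiable.differentiableOn (by unfold eFun; fun_prop), 1, fun z hz => ?_⟩
  rw [norm_eFun, Real.exp_le_one_iff, neg_nonpos]
  exact hU z hz

lemma hInfPlus_eFun {a : ℝ} (ha : 0 ≤ a) : HInfPlus (eFun a) :=
  eFun_mem_boundedHolomorphicOn fun _ hz => mul_nonneg ha (le_of_lt hz)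

lemma hInfMinus_eFun {a : ℝ} (ha : a ≤ 0) : HInfMinus (eFun a) :=
  eFun_mem_boundedHolomorphicOn fun _ hz => mul_nonneg_of_nonpos_of_nonpos ha (le_of_lt hz)

lemma eFun_mul_alternating_sum (N : ℕ) (f g : ℂ → ℂ) (μ s t : ℝ) (e : ℕ → ℝ)
    (he : ∀ j < N, μ + e j = ((N - 1 - j : ℕ) : ℝ) * s + j * t) (z : ℂ) :
    eFun μ z * ∑ j ∈ Finset.range N, (-1 : ℂ) ^ j * f z ^ (N - 1 - j) * g z ^ j * eFun (e j) z =
      ∑ j ∈ Finset.range N, (-1 : ℂ) ^ j * (eFun s z * f z) ^ (N - 1 - j) * (eFun t z * g z) ^ j := by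
  rw [Finset.mul_sum]
  refine Finset.sum_congr rfl fun j hj => ?_
  have hexp : eFun μ z * eFun (e j) z = eFun s z ^ (N - 1 - j) * eFun t z ^ j := by
    rw [eFun_mul_eFun, eFun_pow, eFun_pow, eFun_mul_eFun, he j (Finset.mem_range.mp hj)]
  linear_combination ((-1 : ℂ) ^ j * f z ^ (N - 1 - j) * g z ^ j) * hexp

theorem stmt10_general (lam nu beta : ℝ) (N : ℕ) (hN : 1 < N)
    (hnu : 0 ≤ nu) (hbeta : 0 ≤ beta) (hsum : nu + beta = lam / N)
    (ap am : ℂ → ℂ) (hap : HInfPlus ap) (ham : HInfMinus am)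
    (hbp : HInfPlus fun z => eFun (beta / ((N : ℝ) - 1)) z * am z)
    (hbm : HInfMinus fun z => eFun (-(nu / ((N : ℝ) - 1))) z * ap z) :
    HInfPlus (fun z => eFun (lam - nu) z *
      ∑ j ∈ Finset.range N,
        (-1 : ℂ) ^ j * ap z ^ (N - 1 - j) * am z ^ j * eFun (-((j : ℝ) * lam / N)) z) ∧
    HInfMinus (fun z => eFun (-lam) z * (eFun (lam - nu) z *
      ∑ j ∈ Finset.range N,
        (-1 : ℂ) ^ j * ap z ^ (N - 1 - j) * am z ^ j * eFun (-((j : ℝ) * lam / N)) z)) := by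
  have hN1 : (0 : ℝ) < N - 1 := by
    have : (1 : ℝ) < N := by exact_mod_cast hN
    linarith
  have hcast (j : ℕ) (hj : j < N) : ((N - 1 - j : ℕ) : ℝ) = N - 1 - j := by
    rw [Nat.cast_sub (by omega), Nat.cast_sub (by omega), Nat.cast_one]
  have hlamN : 0 ≤ lam / N := hsum ▸ add_nonneg hnu hbeta
  have hplus := eFun_mul_alternating_sum N ap am (lam - nu) (lam / N + beta / (N - 1))
    (beta / (N - 1)) (fun j => -((j : ℝ) * lam / N)) fun j hj => by
      rw [hcast j hj, show nu = lam / N - beta by linarith]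
      field_simp
      ring
  have hminus := eFun_mul_alternating_sum N ap am (-lam + (lam - nu)) (-(nu / (N - 1)))
    (-(lam / N + nu / (N - 1))) (fun j => -((j : ℝ) * lam / N)) fun j hj => by
      rw [hcast j hj]
      field_simp
      ring
  refine ⟨?_, ?_⟩
  · simp only [hplus]
    exact hInfPlus_iff_mem.2 <| alternating_sum_pow_mem
      (mul_mem (hInfPlus_eFun (by positivity)) hap) hbp N
  · simp only [← mul_assoc, eFun_mul_eFun, hminus]
    have hd : 0 ≤ lam / N + nu / (N - 1) := by positivity
    exact hInfMinus_iff_mem.2 <| alternating_sum_pow_mem hbm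
      (mul_mem (hInfMinus_eFun (neg_nonpos.2 hd)) ham) N

/-- Part of Theorem 4.2: the functions `φ₁₊` and `φ₁₋ = e_{-λ} φ₁₊` belong to `H∞⁺`
and `H∞⁻` respectively. -/
theorem stmt10 (lam nu beta : ℝ) (N : ℕ) (hN : 1 < N) (hlam : 0 < lam)
    (hnu : 0 ≤ nu) (hbeta : 0 ≤ beta) (hsum : nu + beta = lam / N)
    (ap am : ℂ → ℂ) (hap : HInfPlus ap) (ham : HInfMinus am)
    (hbp : HInfPlus fun z => eFun (beta / ((N : ℝ) - 1)) z * am z)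
    (hbm : HInfMinus fun z => eFun (-(nu / ((N : ℝ) - 1))) z * ap z) :
    HInfPlus (fun z => eFun (lam - nu) z *
      ∑ j ∈ Finset.range N,
        (-1 : ℂ) ^ j * ap z ^ (N - 1 - j) * am z ^ j * eFun (-((j : ℝ) * lam / N)) z) ∧
    HInfMinus (fun z => eFun (-lam) z * (eFun (lam - nu) z *
      ∑ j ∈ Finset.range N,
        (-1 : ℂ) ^ j * ap z ^ (N - 1 - j) * am z ^ j * eFun (-((j : ℝ) * lam / N)) z)) :=
  stmt10_general lam nu beta N hN hnu hbeta hsum ap am hap ham hbp hbm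
end
end

section
/- Let λ > 0, N ∈ ℕ with N ≥ 1, ν + β = λ/N, a₊ ∈ H∞⁺, a₋ ∈ H∞⁻, g = a₋ e_{-β} + a₊ e_ν, and let G be the 2×2 matrix function with entries G₁₁ = e_{-λ}, G₁₂ = 0, G₂₁ = g, G₂₂ = e_λ. Define φ₁₊ = e_{λ-ν} ∑_{j=0}^{N-1} (-1)^j a₊^{N-1-j} a₋^j e_{-jλ/N}, φ₂₊ = -a₊^N, φ₁₋ = e_{-λ} φ₁₊, φ₂₋ = (-1)^{N-1} a₋^N. Then G (φ₁₊, φ₂₊)ᵀ = (φ₁₋, φ₂₋)ᵀ pointwise on ℝ. -/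
noncomputable section
open Complex MeasureTheory Filter Topology
open scoped ENNReal

/-! Writing `X = a₊ e_ν` and `Y = a₋ e_{-β}`, the relation `λ = N(ν + β)` turns `φ₁₊` into
`e_β^N ∑_{j<N} (-1)^j X^{N-1-j} Y^j`. Since `g = X + Y`, the second row of `G φ₊` is `e_β^N` times
`(X + Y) ∑_{j<N} (-1)^j X^{N-1-j} Y^j = X^N + (-1)^{N-1} Y^N`, and `e_β^N X^N = a₊^N e_λ`,
`e_β^N Y^N = a₋^N`; the first row is immediate. -/

theorem add_mul_sum_neg_one_pow_mul_pow_mul_pow {R : Type*} [CommRing R] (x y : R) {N : ℕ}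
    (hN : 1 ≤ N) :
    (x + y) * ∑ j ∈ Finset.range N, (-1 : R) ^ j * x ^ (N - 1 - j) * y ^ j
      = x ^ N + (-1 : R) ^ (N - 1) * y ^ N := by
  obtain ⟨M, rfl⟩ := Nat.exists_eq_add_of_le' hN
  have h := geom_sum₂_mul (-y) x (M + 1)
  simp only [neg_pow (y : R), pow_succ (-1 : R) M] at h
  simp only [Nat.add_sub_cancel] at h ⊢
  have hsum : ∑ j ∈ Finset.range (M + 1), (-1 : R) ^ j * x ^ (M - j) * y ^ j
      = ∑ j ∈ Finset.range (M + 1), (-1 : R) ^ j * y ^ j * x ^ (M - j) :=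
    Finset.sum_congr rfl fun j _ => by ring
  rw [hsum]
  linear_combination -h

theorem eFun_add (a b : ℝ) (z : ℂ) : eFun (a + b) z = eFun a z * eFun b z := by
  simp only [eFun, ← Complex.exp_add]
  push_cast
  ring_nf

theorem eFun_nat_mul (n : ℕ) (a : ℝ) (z : ℂ) : eFun (n * a) z = eFun a z ^ n := by
  simp only [eFun, ← Complex.exp_nat_mul]
  push_cast
  ring_nf

theorem eFun_mul_eFun_neg (a : ℝ) (z : ℂ) : eFun a z * eFun (-a) z = 1 := by
  rw [← eFun_add, add_neg_cancel]
  simp [eFun]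

theorem eFun_sub_mul_eFun_neg_mul {lam nu beta : ℝ} {N j : ℕ} (hlam : lam = N * (nu + beta))
    (hj : j < N) (z : ℂ) :
    eFun (lam - nu) z * eFun (-(j * (nu + beta))) z
      = eFun beta z ^ N * eFun nu z ^ (N - 1 - j) * eFun (-beta) z ^ j := by
  have hcast : ((N - 1 - j : ℕ) : ℝ) = N - 1 - j := by
    rw [Nat.sub_sub, Nat.cast_sub (by omega)]
    push_cast
    ring
  rw [← eFun_nat_mul, ← eFun_nat_mul, ← eFun_nat_mul, ← eFun_add, ← eFun_add, ← eFun_add, hcast,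
    hlam]
  ring_nf

theorem stmt11_general (lam nu beta : ℝ) (N : ℕ) (hN : 1 ≤ N)
    (hsum : nu + beta = lam / N)
    (ap am : ℂ → ℂ)
    (g : ℝ → ℂ) (hg : ∀ x : ℝ, g x = am x * eFun (-beta) x + ap x * eFun nu x)
    (G : ℝ → Matrix (Fin 2) (Fin 2) ℂ)
    (hG : ∀ x : ℝ, G x = !![eFun (-lam) x, 0; g x, eFun lam x])
    (φ1p φ2p φ1m φ2m : ℂ → ℂ)
    (hφ1p : ∀ z, φ1p z = eFun (lam - nu) z *
      ∑ j ∈ Finset.range N,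
        (-1 : ℂ) ^ j * ap z ^ (N - 1 - j) * am z ^ j * eFun (-((j : ℝ) * lam / N)) z)
    (hφ2p : ∀ z, φ2p z = -(ap z ^ N))
    (hφ1m : ∀ z, φ1m z = eFun (-lam) z * φ1p z)
    (hφ2m : ∀ z, φ2m z = (-1 : ℂ) ^ (N - 1) * am z ^ N) :
    ∀ x : ℝ, (G x).mulVec ![φ1p x, φ2p x] = ![φ1m x, φ2m x] := by
  intro x
  have hlam : lam = N * (nu + beta) := by
    rw [hsum]
    field_simp
  set X := ap x * eFun nu x
  set Y := am x * eFun (-beta) x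
  have hφ1p_factor : φ1p x = eFun beta x ^ N *
      ∑ j ∈ Finset.range N, (-1 : ℂ) ^ j * X ^ (N - 1 - j) * Y ^ j := by
    rw [hφ1p, Finset.mul_sum, Finset.mul_sum]
    refine Finset.sum_congr rfl fun j hj => ?_
    rw [mul_div_assoc, ← hsum]
    have := eFun_sub_mul_eFun_neg_mul (z := x) hlam (Finset.mem_range.mp hj)
    linear_combination ((-1 : ℂ) ^ j * ap x ^ (N - 1 - j) * am x ^ j) * this
  have hrow2 : g x * φ1p x + eFun lam x * φ2p x = φ2m x := by
    have hX : eFun beta x ^ N * X ^ N = ap x ^ N * eFun lam x := by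
      rw [← mul_pow, hlam, eFun_nat_mul, add_comm, eFun_add]
      ring
    have hY : eFun beta x ^ N * Y ^ N = am x ^ N := by
      rw [← mul_pow, mul_left_comm, eFun_mul_eFun_neg, mul_one]
    have hfactor := add_mul_sum_neg_one_pow_mul_pow_mul_pow X Y hN
    rw [hg, hφ1p_factor, hφ2p, hφ2m]
    linear_combination eFun beta x ^ N * hfactor + hX + (-1 : ℂ) ^ (N - 1) * hY
  ext i
  fin_cases i
  · simp [hG, Matrix.mulVec, dotProduct, hφ1m]
  · simpa [hG, Matrix.mulVec, dotProduct] using hrow2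

/-- The algebraic part of Theorem 4.2: `G (φ₁₊, φ₂₊)ᵀ = (φ₁₋, φ₂₋)ᵀ` pointwise on `ℝ`. -/
theorem stmt11 (lam nu beta : ℝ) (N : ℕ) (hN : 1 ≤ N) (hlam : 0 < lam)
    (hnu : 0 ≤ nu) (hbeta : 0 ≤ beta) (hsum : nu + beta = lam / N)
    (ap am : ℂ → ℂ) (hap : HInfPlus ap) (ham : HInfMinus am)
    (g : ℝ → ℂ) (hg : ∀ x : ℝ, g x = am x * eFun (-beta) x + ap x * eFun nu x)
    (G : ℝ → Matrix (Fin 2) (Fin 2) ℂ)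
    (hG : ∀ x : ℝ, G x = !![eFun (-lam) x, 0; g x, eFun lam x])
    (φ1p φ2p φ1m φ2m : ℂ → ℂ)
    (hφ1p : ∀ z, φ1p z = eFun (lam - nu) z *
      ∑ j ∈ Finset.range N,
        (-1 : ℂ) ^ j * ap z ^ (N - 1 - j) * am z ^ j * eFun (-((j : ℝ) * lam / N)) z)
    (hφ2p : ∀ z, φ2p z = -(ap z ^ N))
    (hφ1m : ∀ z, φ1m z = eFun (-lam) z * φ1p z)
    (hφ2m : ∀ z, φ2m z = (-1 : ℂ) ^ (N - 1) * am z ^ N) :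
    ∀ x : ℝ, (G x).mulVec ![φ1p x, φ2p x] = ![φ1m x, φ2m x] :=
  stmt11_general lam nu beta N hN hsum ap am g hg G hG φ1p φ2p φ1m φ2m hφ1p hφ2p hφ1m hφ2m
end
end

section
/- Let c₁, c₂, c₋₁, c₋₂ ∈ ℂ be all nonzero, let 0 ≤ η₁₋ < η₂₋ and 0 ≤ η₁₊ < η₂₊ be reals, put g₋(z) = c₋₂ e^{-iη₂₋ z} + c₋₁ e^{-iη₁₋ z}, g₊(z) = c₁ e^{iη₁₊ z} + c₂ e^{iη₂₊ z}, and suppose the ratio r = (η₂₊−η₁₊)/(η₂₋−η₁₋) is irrational. Then inf over the zeros z_k of g₋ of |g₊(z_k)| > 0 if and only if |c₁/c₂|^{η₂₋−η₁₋} ≠ |c₋₂/c₋₁|^{η₂₊−η₁₊}. -/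
/-!
At a zero `z_k` of `g₋` one has `g₊(z_k) = e^{iη₁₊ z_k} (c₁ + c₂ ρ e^{iφ_k})`, where
`|e^{iη₁₊ z_k}|` does not depend on `k`, `ρ = |c₋₂/c₋₁|^r` and `φ_k = φ₀ + 2πkr` with
`r = (η₂₊ − η₁₊)/(η₂₋ − η₁₋)`. For irrational `r` the points `e^{iφ_k}` are dense in the unit
circle, and `min_{|u| = 1} |c₁ + c₂ ρ u| = ||c₁| − |c₂| ρ|`, so the values stay away from `0`
exactly when `|c₁| ≠ |c₂| ρ`, i.e. when `|c₁/c₂|^{η₂₋−η₁₋} ≠ |c₋₂/c₋₁|^{η₂₊−η₁₊}`.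
-/

noncomputable section
open Complex

open Real in
theorem Circle.denseRange_exp_add_int_mul {r : ℝ} (hr : Irrational r) (α : ℝ) :
    DenseRange fun k : ℤ => Circle.exp (α + k * (2 * π * r)) := by
  have hS : Dense (AddSubgroup.closure {2 * π * r, 2 * π} : Set ℝ) :=
    dense_addSubgroupClosure_pair_iff.2 (by rwa [mul_div_cancel_left₀ _ two_pi_pos.ne'])
  have hexp : DenseRange fun t => Circle.exp (α + t) :=
    (Circle.exp_surjective.comp (add_left_surjective α)).denseRange
  refine (hexp.dense_image (by fun_prop) hS).mono ?_
  rintro _ ⟨t, ht, rfl⟩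
  obtain ⟨k, m, rfl⟩ := AddSubgroup.mem_closure_pair.1 ht
  refine ⟨k, ?_⟩
  simp only [zsmul_eq_mul, ← add_assoc, Circle.exp_add _ (m * (2 * π)),
    Circle.exp_int_mul_two_pi, mul_one]

theorem Circle.exists_mul_eq_of_norm_eq {a b : ℂ} (h : ‖a‖ = ‖b‖) : ∃ v : Circle, b * v = a := by
  rcases eq_or_ne b 0 with rfl | hb
  · exact ⟨1, by simpa [eq_comm] using h⟩
  refine ⟨Circle.exp (a / b).arg, ?_⟩
  have hab : ‖a / b‖ = 1 := by rw [norm_div, h, div_self (norm_ne_zero_iff.2 hb)]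
  rw [Circle.coe_exp, ← one_mul (Complex.exp _), ← ofReal_one, ← hab, norm_mul_exp_arg_mul_I,
    mul_div_cancel₀ _ hb]

theorem DenseRange.exists_pos_forall_le_norm_add_mul_iff {ι : Type*} {u : ι → Circle}
    (hu : DenseRange u) (a b : ℂ) : (∃ ε > 0, ∀ i, ε ≤ ‖a + b * u i‖) ↔ ‖a‖ ≠ ‖b‖ := by
  constructor
  · rintro ⟨ε, hε, hle⟩ hab
    obtain ⟨v, hv⟩ := Circle.exists_mul_eq_of_norm_eq (a := -a) (b := b) (by rw [norm_neg, hab])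
    have hv' : ε ≤ ‖a + b * v‖ :=
      hu.induction_on v (isClosed_le continuous_const (by fun_prop)) hle
    rw [hv, add_neg_cancel, norm_zero] at hv'
    exact hε.not_ge hv'
  · intro hab
    refine ⟨|‖a‖ - ‖b‖|, abs_pos.2 (sub_ne_zero.2 hab), fun i => ?_⟩
    calc |‖a‖ - ‖b‖| = |‖a‖ - ‖-(b * u i)‖| := by
          rw [norm_neg, norm_mul, Circle.norm_coe, mul_one]
      _ ≤ ‖a - -(b * u i)‖ := abs_norm_sub_norm_le _ _
      _ = ‖a + b * u i‖ := by rw [sub_neg_eq_add]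

theorem exists_pos_forall_le_mul_iff {ι : Type*} {f : ι → ℝ} {A : ℝ} (hA : 0 < A) :
    (∃ ε > 0, ∀ i, ε ≤ A * f i) ↔ ∃ ε > 0, ∀ i, ε ≤ f i := by
  constructor
  · rintro ⟨ε, hε, h⟩
    exact ⟨ε / A, by positivity, fun i => (div_le_iff₀' hA).2 (h i)⟩
  · rintro ⟨ε, hε, h⟩
    exact ⟨A * ε, by positivity, fun i => mul_le_mul_of_nonneg_left (h i) hA.le⟩

theorem Real.rpow_eq_rpow_iff_eq_rpow_div {x y a b : ℝ} (hx : 0 ≤ x) (hy : 0 ≤ y) (ha : a ≠ 0) :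
    x ^ a = y ^ b ↔ x = y ^ (b / a) := by
  rw [← div_mul_cancel₀ b ha, Real.rpow_mul hy, mul_div_cancel_right₀ _ ha]
  exact (Real.rpow_left_injOn ha).eq_iff hx (Real.rpow_nonneg hy _)

theorem Complex.exp_I_mul_ofReal_mul (c : ℝ) (z : ℂ) :
    exp (I * c * z) = Real.exp (-(c * z.im)) * Circle.exp (c * z.re) := by
  rw [Circle.coe_exp, ofReal_exp, ← Complex.exp_add]
  congr 1
  apply Complex.ext <;> simp

theorem Complex.norm_mul_exp_add_mul_exp (c₁ c₂ : ℂ) (a b : ℝ) (z : ℂ) :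
    ‖c₁ * exp (I * a * z) + c₂ * exp (I * b * z)‖ =
      Real.exp (-(a * z.im)) *
        ‖c₁ + c₂ * ↑(Real.exp (-((b - a) * z.im))) * Circle.exp ((b - a) * z.re)‖ := by
  have hsplit : exp (I * b * z) = exp (I * a * z) * exp (I * ↑(b - a) * z) := by
    rw [← Complex.exp_add]; push_cast; ring_nf
  calc ‖c₁ * exp (I * a * z) + c₂ * exp (I * b * z)‖
      = ‖exp (I * a * z)‖ * ‖c₁ + c₂ * exp (I * ↑(b - a) * z)‖ := by
        rw [← norm_mul, hsplit]; ring_nf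
    _ = _ := by
        rw [exp_I_mul_ofReal_mul, exp_I_mul_ofReal_mul, norm_mul, Circle.norm_coe, norm_real,
          Real.norm_of_nonneg (Real.exp_pos _).le, mul_one, mul_assoc]

theorem stmt19_general (c1 c2 cm1 cm2 : ℂ)
    (hc2 : c2 ≠ 0) (hcm1 : cm1 ≠ 0) (hcm2 : cm2 ≠ 0)
    (e1m e2m e1p e2p : ℝ)
    (hirr : Irrational ((e2p - e1p) / (e2m - e1m)))
    (zk : ℤ → ℂ)
    (hzk : ∀ k : ℤ, zk k = (1 / ((e2m : ℂ) - (e1m : ℂ))) *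
      (((-cm2 / cm1).arg : ℂ) + 2 * (k : ℂ) * (Real.pi : ℂ)
        - Complex.I * (Real.log ‖cm2 / cm1‖ : ℂ)))
    (gp : ℂ → ℂ)
    (hgp : ∀ z : ℂ, gp z
      = c1 * Complex.exp (Complex.I * e1p * z) + c2 * Complex.exp (Complex.I * e2p * z)) :
    (∃ ε : ℝ, 0 < ε ∧ ∀ k : ℤ, ε ≤ ‖gp (zk k)‖) ↔
      Real.rpow ‖c1 / c2‖ (e2m - e1m)
        ≠ Real.rpow ‖cm2 / cm1‖ (e2p - e1p) := by
  set θ := (-cm2 / cm1).arg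
  set y := ‖cm2 / cm1‖
  have hy : 0 < y := norm_pos_iff.2 (div_ne_zero hcm2 hcm1)
  -- a zero denominator would make the ratio `x / 0 = 0` rational
  have hΔm : e2m - e1m ≠ 0 := fun h => hirr ⟨0, by simp [h]⟩
  have hzk' : ∀ k : ℤ, zk k = ↑((θ + 2 * k * Real.pi) / (e2m - e1m))
      + ↑(-(Real.log y / (e2m - e1m))) * I := fun k => by
    have : (e2m : ℂ) - e1m ≠ 0 := by exact_mod_cast hΔm
    rw [hzk]; push_cast; field_simp; ring
  have hzk_im : ∀ k, (zk k).im = -(Real.log y / (e2m - e1m)) := fun k => by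
    simp only [hzk', add_im, ofReal_im, mul_im, I_re, I_im, ofReal_re]; ring
  have hzk_re : ∀ k : ℤ, (e2p - e1p) * (zk k).re
      = (e2p - e1p) * θ / (e2m - e1m) + k * (2 * Real.pi * ((e2p - e1p) / (e2m - e1m))) :=
    fun k => by simp only [hzk', add_re, ofReal_re, mul_re, I_re, I_im, ofReal_im]; ring
  have hnorm : ∀ k, ‖gp (zk k)‖ = Real.exp (e1p * (Real.log y / (e2m - e1m))) *
      ‖c1 + c2 * ↑(y ^ ((e2p - e1p) / (e2m - e1m))) *
        Circle.exp ((e2p - e1p) * θ / (e2m - e1m)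
          + k * (2 * Real.pi * ((e2p - e1p) / (e2m - e1m))))‖ :=
    fun k => by
      rw [hgp, norm_mul_exp_add_mul_exp, hzk_im, hzk_re, Real.rpow_def_of_pos hy]
      ring_nf
  simp_rw [hnorm]
  rw [exists_pos_forall_le_mul_iff (Real.exp_pos _),
    DenseRange.exists_pos_forall_le_norm_add_mul_iff (Circle.denseRange_exp_add_int_mul hirr _),
    Real.rpow_eq_pow, Real.rpow_eq_pow, Ne, Ne,
    Real.rpow_eq_rpow_iff_eq_rpow_div (norm_nonneg _) hy.le hΔm, norm_mul, norm_real,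
    Real.norm_of_nonneg (Real.rpow_nonneg hy.le _), norm_div, div_eq_iff (norm_ne_zero_iff.2 hc2),
    mul_comm]

/-- Example 5.13 / Lemma 3.3 of [BKdST2]: for irrational ratio of frequency gaps, the
values of `g₊` at the zeros `z_k` of the binomial `g₋` are bounded away from `0` iff
`|c₁/c₂|^{η₂₋−η₁₋} ≠ |c₋₂/c₋₁|^{η₂₊−η₁₊}`. -/
theorem stmt19 (c1 c2 cm1 cm2 : ℂ)
    (hc1 : c1 ≠ 0) (hc2 : c2 ≠ 0) (hcm1 : cm1 ≠ 0) (hcm2 : cm2 ≠ 0)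
    (e1m e2m e1p e2p : ℝ)
    (h1m : 0 ≤ e1m) (hm : e1m < e2m) (h1p : 0 ≤ e1p) (hp : e1p < e2p)
    (hirr : Irrational ((e2p - e1p) / (e2m - e1m)))
    (zk : ℤ → ℂ)
    (hzk : ∀ k : ℤ, zk k = (1 / ((e2m : ℂ) - (e1m : ℂ))) *
      (((-cm2 / cm1).arg : ℂ) + 2 * (k : ℂ) * (Real.pi : ℂ)
        - Complex.I * (Real.log ‖cm2 / cm1‖ : ℂ)))
    (gp : ℂ → ℂ)
    (hgp : ∀ z : ℂ, gp z
      = c1 * Complex.exp (Complex.I * e1p * z) + c2 * Complex.exp (Complex.I * e2p * z)) :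
    (∃ ε : ℝ, 0 < ε ∧ ∀ k : ℤ, ε ≤ ‖gp (zk k)‖) ↔
      Real.rpow ‖c1 / c2‖ (e2m - e1m)
        ≠ Real.rpow ‖cm2 / cm1‖ (e2p - e1p) :=
  stmt19_general c1 c2 cm1 cm2 hc2 hcm1 hcm2 e1m e2m e1p e2p hirr zk hzk gp hgp
end
end
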